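/- For every n ≥ 1, the block length L_n = |B_n| is odd. -/

import Mathlib

/-- Generation operator: expand a run-length vector `R` starting with symbol `s`,
alternating between `s` and `4 - s` from run to run. -/
def G : List ℕ → ℕ → List ℕ
  | [], _ => []
  | r :: rs, s => List.replicate r s ++ G rs (4 - s)

/-- Pillar sequences: `P 1 = [3]`, `P (n+1) = G (P n) 3` for `n ≥ 1`. -/
def P : ℕ → List ℕ
  | 0 => []
  | 1 => [3]
  | n + 2 => G (P (n + 1)) 3

/-- Block sequences: `B 1 = G [1,3,3,3,1] 1`, `B (n+1) = B n ++ P n ++ B n` for `n ≥ 1`. -/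
def B : ℕ → List ℕ
  | 0 => []
  | 1 => G [1, 3, 3, 3, 1] 1
  | n + 2 => B (n + 1) ++ P (n + 1) ++ B (n + 1)

/-!
Since `B (n+1) = B n ++ P n ++ B n`, we have `|B (n+1)| = 2 |B n| + |P n|`, so it suffices that every
pillar has odd length. Now `|G R s| = ΣR`, and as every symbol 1 or 3 is odd, `Σ G R s ≡ |G R s| = ΣR`
(mod 2). Hence `|P (n+1)| = Σ P n` and `Σ P (n+1) ≡ Σ P n`, all odd because `Σ P 1 = 3`.
-/

lemma length_G (R : List ℕ) (s : ℕ) : (G R s).length = R.sum := by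
  induction R generalizing s with
  | nil => rfl
  | cons r rs ih => simp [G, ih]

lemma odd_sum_G_iff (R : List ℕ) {s : ℕ} (hs : s = 1 ∨ s = 3) :
    Odd (G R s).sum ↔ Odd R.sum := by
  induction R generalizing s with
  | nil => rfl
  | cons r rs ih =>
    have hs_odd : Odd s := by rcases hs with rfl | rfl <;> decide
    have ih' := ih (s := 4 - s) (by omega)
    simp only [G, List.sum_append, List.sum_replicate, smul_eq_mul, List.sum_cons,
      Nat.odd_add, Nat.odd_mul, hs_odd, and_true, ← Nat.not_odd_iff_even, ih']

lemma P_succ {n : ℕ} (hn : 1 ≤ n) : P (n + 1) = G (P n) 3 := by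
  obtain ⟨k, rfl⟩ := Nat.exists_eq_add_of_le' hn
  rfl

lemma B_succ {n : ℕ} (hn : 1 ≤ n) : B (n + 1) = B n ++ P n ++ B n := by
  obtain ⟨k, rfl⟩ := Nat.exists_eq_add_of_le' hn
  rfl

lemma odd_sum_P {n : ℕ} (hn : 1 ≤ n) : Odd (P n).sum := by
  induction n, hn using Nat.le_induction with
  | base => decide
  | succ n hn ih => rwa [P_succ hn, odd_sum_G_iff _ (Or.inr rfl)]

lemma odd_length_P {n : ℕ} (hn : 1 ≤ n) : Odd (P n).length := by
  induction n, hn using Nat.le_induction with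
  | base => decide
  | succ n hn _ => rw [P_succ hn, length_G]; exact odd_sum_P hn

/-- For every `n ≥ 1`, the block length `L n = |B n|` is odd. -/
theorem block_length_odd : ∀ n : ℕ, 1 ≤ n → Odd (B n).length := by
  intro n hn
  induction n, hn using Nat.le_induction with
  | base => decide
  | succ n hn ih =>
    rw [B_succ hn, List.length_append, List.length_append]
    exact (ih.add_odd (odd_length_P hn)).add_odd ih
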